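/- A graded sequence with matrix $A\in L$ is $W$-Appell if and only if $A = \alpha(M_W)$ for some power series $\alpha\in\mathbb{F}[[y]]$ of valuation 0 substituted at the matrix $M_W$, where $M_W$ is the matrix with $(n,n-1)$-entry $w_n/w_{n-1}$ and zeros elsewhere; moreover the substituted series $\alpha$ is exactly the $\alpha$-parameter $\sum_l a_{l,0}y^l/w_l$ of $A$. -/

import Mathlib

/-!
Write `a n k` for the coefficients of `p n`. Since `p` is a basis of `F[X]`, comparing
coefficients shows that `Q = D_W` says exactly
`w (k+1) / w k * a (n+1) (k+1) = w (n+1) / w n * a n k`, i.e. that `A` commutes with `M_W`.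
After the renormalisation `b n k = a n k * w k / w n` this says that `b` is constant along
diagonals, `b n k = b (n - k) 0`. On the other hand `(M_W ^ r) n k` is `w n / w k` if
`n = k + r` and `0` otherwise, so `α(M_W)` is exactly such a matrix, with `α_l = a l 0 / w l`.
-/

open Polynomial

def matMul {F : Type*} [Field F] (A B : ℕ → ℕ → F) : ℕ → ℕ → F :=
  fun n l => ∑ k ∈ Finset.range (n + 1), A n k * B k l

def idMat {F : Type*} [Field F] : ℕ → ℕ → F :=
  fun n k => if n = k then 1 else 0

/-- The matrix `M_W` representing the weighted derivative `D_W` in the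
monomial basis: `(M_W)_{n,n-1} = wₙ/wₙ₋₁` and zeros elsewhere. -/
noncomputable def Mw {F : Type*} [Field F] (w : ℕ → F) : ℕ → ℕ → F :=
  fun n k => if k + 1 = n then w n / w (n - 1) else 0

/-- Powers of `M_W`. -/
noncomputable def Mpow {F : Type*} [Field F] (w : ℕ → F) : ℕ → ℕ → ℕ → F
  | 0 => idMat
  | r + 1 => matMul (Mw w) (Mpow w r)

section
variable {F : Type*} [Field F]

lemma Mpow_apply {w : ℕ → F} (hw : ∀ n, w n ≠ 0) (r n k : ℕ) :
    Mpow w r n k = if k + r = n then w n / w k else 0 := by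
  induction r generalizing n with
  | zero =>
    rcases eq_or_ne n k with rfl | h
    · simp [Mpow, idMat, hw]
    · simp [Mpow, idMat, h, Ne.symm h]
  | succ r ih =>
    cases n with
    | zero => simp [Mpow, matMul, Mw]
    | succ m =>
      rw [Mpow, matMul, Finset.sum_eq_single_of_mem m (by simp), ih]
      · by_cases h : k + r = m
        · rw [if_pos h, if_pos (by omega), Mw, if_pos rfl, Nat.add_sub_cancel,
            div_mul_div_cancel₀ (hw m)]
        · rw [if_neg h, if_neg (by omega), mul_zero]
      · intro j _ hjm
        simp [Mw, hjm]

lemma sum_mul_Mpow_apply {w : ℕ → F} (hw : ∀ n, w n ≠ 0) (c : ℕ → F) (n k : ℕ) :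
    ∑ r ∈ Finset.range (n + 1), c r * Mpow w r n k
      = if k ≤ n then c (n - k) * (w n / w k) else 0 := by
  simp_rw [Mpow_apply hw, mul_ite, mul_zero]
  split_ifs with hk
  · rw [Finset.sum_eq_single_of_mem (n - k) (Finset.mem_range.2 (by omega)), if_pos (by omega)]
    intro r _ hr
    rw [if_neg (by omega)]
  · exact Finset.sum_eq_zero fun r _ => if_neg (by omega)

lemma coeff_apply_of_weightedDeriv {w : ℕ → F} {D : F[X] →ₗ[F] F[X]} (hD0 : D 1 = 0)
    (hD : ∀ n : ℕ, D (X ^ (n + 1)) = (w (n + 1) / w n) • (X : F[X]) ^ n) (q : F[X]) (k : ℕ) :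
    (D q).coeff k = w (k + 1) / w k * q.coeff (k + 1) := by
  induction q using Polynomial.induction_on' with
  | add u v hu hv => simp [hu, hv, mul_add]
  | monomial i a =>
    rw [← C_mul_X_pow_eq_monomial, ← smul_eq_C_mul, map_smul]
    cases i with
    | zero => simp [hD0, coeff_one]
    | succ i =>
      rw [hD i]
      by_cases h : k = i
      · subst h; simp; ring
      · simp [coeff_X_pow, h]

lemma apply_eq_apply_sub_zero_of_apply_succ_succ {α : Type*} {b : ℕ → ℕ → α}
    (hb : ∀ n k, b (n + 1) (k + 1) = b n k) {n k : ℕ} (hkn : k ≤ n) : b n k = b (n - k) 0 := by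
  obtain ⟨m, rfl⟩ := Nat.exists_eq_add_of_le hkn
  rw [Nat.add_sub_cancel_left]
  induction k with
  | zero => rw [zero_add]
  | succ k ih => rw [add_right_comm, hb, ih (Nat.le_add_right k m)]

lemma eq_div_mul_div_of_recurrence {w : ℕ → F} (hw0 : w 0 = 1) (hw : ∀ n, w n ≠ 0)
    {a : ℕ → ℕ → F}
    (ha : ∀ n k, w (k + 1) / w k * a (n + 1) (k + 1) = w (n + 1) / w n * a n k)
    {n k : ℕ} (hkn : k ≤ n) : a n k = a (n - k) 0 / w (n - k) * (w n / w k) := by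
  have hb := apply_eq_apply_sub_zero_of_apply_succ_succ
    (b := fun n k => a n k * w k / w n) (fun n k => ?_) hkn
  · simp only [hw0] at hb
    field_simp [hw] at hb ⊢
    linear_combination hb
  · have := ha n k
    field_simp [hw] at this ⊢
    linear_combination this

lemma recurrence_of_eq_mul_div {w : ℕ → F} (hw : ∀ n, w n ≠ 0) {a : ℕ → ℕ → F} (c : ℕ → F)
    (ha : ∀ n k, a n k = if k ≤ n then c (n - k) * (w n / w k) else 0) (n k : ℕ) :
    w (k + 1) / w k * a (n + 1) (k + 1) = w (n + 1) / w n * a n k := by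
  rw [ha, ha]
  by_cases hkn : k ≤ n
  · rw [if_pos (by omega), if_pos hkn, Nat.add_sub_add_right]
    field_simp [hw]
  · rw [if_neg (by omega), if_neg hkn, mul_zero, mul_zero]

lemma eq_weightedDeriv_iff {w : ℕ → F} {p : ℕ → F[X]} (hp : ∀ n, (p n).degree = n)
    {Q D : F[X] →ₗ[F] F[X]} (hQ0 : Q (p 0) = 0)
    (hQ : ∀ n : ℕ, Q (p (n + 1)) = (w (n + 1) / w n) • p n) (hD0 : D 1 = 0)
    (hD : ∀ n : ℕ, D (X ^ (n + 1)) = (w (n + 1) / w n) • (X : F[X]) ^ n) :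
    Q = D ↔ ∀ n k,
      w (k + 1) / w k * (p (n + 1)).coeff (k + 1) = w (n + 1) / w n * (p n).coeff k := by
  have hD_succ : ∀ n, D (p (n + 1)) = Q (p (n + 1)) ↔ ∀ k,
      w (k + 1) / w k * (p (n + 1)).coeff (k + 1) = w (n + 1) / w n * (p n).coeff k := by
    intro n
    simp only [Polynomial.ext_iff, coeff_apply_of_weightedDeriv hD0 hD, hQ, coeff_smul,
      smul_eq_mul]
  simp_rw [← hD_succ]
  refine ⟨fun h n => h ▸ rfl, fun h => ?_⟩
  have hspan := Polynomial.Sequence.span ⟨p, hp⟩ fun n =>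
    (leadingCoeff_ne_zero.2 (ne_zero_of_degree_gt (n := ⊥) (by simp [hp]))).isUnit
  refine LinearMap.ext_on_range hspan fun n => ?_
  cases n with
  | zero =>
    show Q (p 0) = D (p 0)
    ext k
    rw [hQ0, coeff_zero, coeff_apply_of_weightedDeriv hD0 hD,
      coeff_eq_zero_of_degree_lt (p := p 0) (by rw [hp]; exact_mod_cast k.succ_pos), mul_zero]
  | succ n => exact (h n).symm

end

/-- A graded sequence with matrix `A` is `W`-Appell iff `A = α(M_W)` for a
power series `α` of valuation `0` substituted at `M_W` (the `(n,k)`-entry of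
`α(M_W)` being `∑ᵣ (coeff r α) (M_W^r)_{n,k}`, a finite sum); moreover `α` is
then exactly the `α`-parameter `∑ₗ a_{l,0} yˡ/wₗ` of `A`. -/
theorem stmt16 {F : Type*} [Field F] (w : ℕ → F) (hw0 : w 0 = 1)
    (hw : ∀ n, w n ≠ 0)
    (p : ℕ → F[X]) (hp : ∀ n, (p n).degree = n)
    (Q : F[X] →ₗ[F] F[X]) (hQ0 : Q (p 0) = 0)
    (hQ : ∀ n : ℕ, Q (p (n + 1)) = (w (n + 1) / w n) • p n)
    -- the weighted derivative `D_W`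
    (D : F[X] →ₗ[F] F[X]) (hD0 : D 1 = 0)
    (hD : ∀ n : ℕ, D (X ^ (n + 1)) = (w (n + 1) / w n) • (X : F[X]) ^ n) :
    -- `W`-Appell (`Q = D_W`) iff `A = α(M_W)` with `v(α) = 0`
    ((Q = D) ↔
      ∃ α : PowerSeries F, PowerSeries.constantCoeff α ≠ 0 ∧
        ∀ n k : ℕ, (p n).coeff k =
          ∑ r ∈ Finset.range (n + 1), PowerSeries.coeff r α * Mpow w r n k) ∧
    -- and then the series is the `α`-parameter `∑ₗ a_{l,0} yˡ/wₗ`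
    ((Q = D) →
      ∀ n k : ℕ, (p n).coeff k =
        ∑ r ∈ Finset.range (n + 1), ((p r).coeff 0 / w r) * Mpow w r n k) := by
  have hAppell := eq_weightedDeriv_iff hp hQ0 hQ hD0 hD
  have hα : Q = D → ∀ n k : ℕ, (p n).coeff k =
      ∑ r ∈ Finset.range (n + 1), ((p r).coeff 0 / w r) * Mpow w r n k := by
    intro h n k
    rw [sum_mul_Mpow_apply hw]
    split_ifs with hkn
    · exact eq_div_mul_div_of_recurrence hw0 hw (a := fun n k => (p n).coeff k) (hAppell.1 h) hkn
    · exact coeff_eq_zero_of_degree_lt (by rw [hp]; exact_mod_cast Nat.lt_of_not_le hkn)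
  refine ⟨⟨fun h => ⟨PowerSeries.mk fun l => (p l).coeff 0 / w l, ?_, ?_⟩, ?_⟩, hα⟩
  · simpa [hw0] using coeff_ne_zero_of_eq_degree (hp 0)
  · simpa using hα h
  · rintro ⟨α, -, hαM⟩
    refine hAppell.2 (recurrence_of_eq_mul_div hw (a := fun n k => (p n).coeff k)
      (fun r => PowerSeries.coeff r α) fun n k => ?_)
    rw [hαM, sum_mul_Mpow_apply hw]
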